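/- arXiv:1908.05983 — 2 statements merged into one kernel-verified Lean document; each statement's English description precedes it below -/
import Mathlib

section
/- Let 1 ≤ k ≤ n_1 ≤ n_2 ≤ ... ≤ n_r be integers. The maximum number of edges in a subhypergraph of the complete r-partite r-uniform hypergraph K^{(r)}_{n_1,...,n_r} with no matching of size k equals (k−1) n_2 n_3 ⋯ n_r. -/
/-!
Edges of `K^{(r)}_{n_1,…,n_r}` are transversals `g : ∀ i, Fin (n i)`. Let `V_{i₀}` be a
smallest part. The edges through `k - 1` fixed vertices of `V_{i₀}` are `(k - 1) ∏_{i ≠ i₀} n i`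
in number, and those vertices cover all of them, so no `k` of them are disjoint. Conversely, the
edges split into `∏_{i ≠ i₀} n i` cyclic diagonals `g i - g i₀ ≡ c i (mod n i)`; two distinct
transversals of one diagonal that agree in some coordinate would agree at `i₀` and hence
everywhere, so each diagonal is a matching and a family without a `k`-matching has at most
`k - 1` edges in each.
-/

/-- `H` (a family of finite edge sets) contains a matching of size `k`:
`k` pairwise disjoint edges. -/
def hasMatching {α : Type*} [DecidableEq α] (H : Finset (Finset α)) (k : ℕ) : Prop :=
  ∃ M ⊆ H, M.card = k ∧ (M : Set (Finset α)).Pairwise Disjoint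

/-- The edge set of the complete `r`-partite `s`-uniform hypergraph with parts
`V i = Fin (n i)`: all `s`-sets meeting each part in at most one vertex. -/
def crossEdges (r s : ℕ) (n : Fin r → ℕ) : Finset (Finset ((i : Fin r) × Fin (n i))) :=
  Finset.univ.filter fun S =>
    S.card = s ∧ ∀ i : Fin r, (S.filter fun v => v.1 = i).card ≤ 1

/-- `T` is a copy of `K_r^{(s)}` in the `s`-graph `H`: it is a transversal
(one vertex in each part) all of whose `s`-subsets are edges of `H`. -/
def isKrCopy (r s : ℕ) (n : Fin r → ℕ) (H : Finset (Finset ((i : Fin r) × Fin (n i))))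
    (T : Finset ((i : Fin r) × Fin (n i))) : Prop :=
  (∀ i : Fin r, (T.filter fun v => v.1 = i).card = 1) ∧ ∀ S ∈ T.powersetCard s, S ∈ H

/-- `H` contains `k` pairwise vertex-disjoint copies of `K_r^{(s)}`. -/
def hasKDisjointKr (r s k : ℕ) (n : Fin r → ℕ)
    (H : Finset (Finset ((i : Fin r) × Fin (n i)))) : Prop :=
  ∃ C : Finset (Finset ((i : Fin r) × Fin (n i))), C.card = k ∧
    (∀ T ∈ C, isKrCopy r s n H T) ∧
    (C : Set (Finset ((i : Fin r) × Fin (n i)))).Pairwise Disjoint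

/-- The number of `s`-cliques of the graph with edge set `H`
(an `s`-clique is an `s`-set all of whose `2`-subsets are edges). -/
def cliqueCount (r s : ℕ) (n : Fin r → ℕ)
    (H : Finset (Finset ((i : Fin r) × Fin (n i)))) : ℕ :=
  (Finset.univ.filter fun S : Finset ((i : Fin r) × Fin (n i)) =>
    S.card = s ∧ ∀ e ∈ S.powersetCard 2, e ∈ H).card

open Finset

section Matching

variable {α : Type*} [DecidableEq α] {H : Finset (Finset α)} {k : ℕ}

lemma hasMatching_of_le_card {F : Finset (Finset α)} (hFH : F ⊆ H)
    (hF : (F : Set (Finset α)).Pairwise Disjoint) (hkF : k ≤ #F) : hasMatching H k := by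
  obtain ⟨M, hMF, hM⟩ := exists_subset_card_eq hkF
  exact ⟨M, hMF.trans hFH, hM, hF.mono hMF⟩

lemma not_hasMatching_of_cover {S : Finset α} (hS : #S < k)
    (hcover : ∀ e ∈ H, (e ∩ S).Nonempty) : ¬ hasMatching H k := by
  rintro ⟨M, hMH, rfl, hM⟩
  refine hS.not_ge ?_
  calc #M = ∑ _e ∈ M, 1 := (card_eq_sum_ones M)
    _ ≤ ∑ e ∈ M, #(e ∩ S) := sum_le_sum fun e he => card_pos.mpr (hcover e (hMH he))
    _ = #(M.biUnion (· ∩ S)) :=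
      (card_biUnion fun e he e' he' hne =>
        (hM he he' hne).mono inter_subset_left inter_subset_left).symm
    _ ≤ #S := card_le_card (biUnion_subset.mpr fun _ _ => inter_subset_right)

end Matching

section Transversal

variable {r : ℕ} {n : Fin r → ℕ}

def transversal (n : Fin r → ℕ) (g : ∀ i, Fin (n i)) : Finset ((i : Fin r) × Fin (n i)) :=
  univ.map ⟨fun i => ⟨i, g i⟩, fun _ _ h => congrArg Sigma.fst h⟩

lemma mk_mem_transversal {g : ∀ i, Fin (n i)} {i : Fin r} {x : Fin (n i)} :
    ⟨i, x⟩ ∈ transversal n g ↔ g i = x := by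
  simp only [transversal, mem_map, mem_univ, true_and]
  constructor
  · rintro ⟨j, h⟩
    obtain ⟨rfl, h⟩ := Sigma.mk.inj_iff.mp h
    exact eq_of_heq h
  · rintro rfl
    exact ⟨i, rfl⟩

@[simp]
lemma card_transversal (g : ∀ i, Fin (n i)) : #(transversal n g) = r := by
  simp [transversal]

lemma transversal_injective : Function.Injective (transversal n) := by
  intro g g' h
  funext i
  rw [← mk_mem_transversal, h, mk_mem_transversal]

def transversalEmb (n : Fin r → ℕ) : (∀ i, Fin (n i)) ↪ Finset ((i : Fin r) × Fin (n i)) :=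
  ⟨transversal n, transversal_injective⟩

lemma disjoint_transversal {g g' : ∀ i, Fin (n i)} (h : ∀ i, g i ≠ g' i) :
    Disjoint (transversal n g) (transversal n g') := by
  rw [disjoint_left]
  rintro ⟨i, x⟩ hx hx'
  exact h i ((mk_mem_transversal.mp hx).trans (mk_mem_transversal.mp hx').symm)

lemma transversal_mem_crossEdges (g : ∀ i, Fin (n i)) : transversal n g ∈ crossEdges r r n := by
  refine mem_filter.mpr ⟨mem_univ _, card_transversal g, fun i => card_le_one.mpr ?_⟩
  rintro ⟨j, x⟩ hx ⟨j', x'⟩ hx'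
  simp only [mem_filter, mk_mem_transversal] at hx hx'
  obtain ⟨rfl, rfl⟩ := hx
  obtain ⟨rfl, rfl⟩ := hx'
  rfl

/-- An `r`-set meeting each of the `r` parts at most once meets each of them exactly once. -/
lemma exists_transversal_eq {e : Finset ((i : Fin r) × Fin (n i))}
    (he : e ∈ crossEdges r r n) : ∃ g, transversal n g = e := by
  obtain ⟨-, hcard, hfiber⟩ := mem_filter.mp he
  have hinj : Set.InjOn Sigma.fst (e : Set ((i : Fin r) × Fin (n i))) := fun v hv w hw h =>
    card_le_one.mp (hfiber v.1) v (mem_filter.mpr ⟨hv, rfl⟩) w (mem_filter.mpr ⟨hw, h.symm⟩)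
  have hsurj : e.image Sigma.fst = univ :=
    eq_univ_of_card _ (by rw [card_image_of_injOn hinj, hcard, Fintype.card_fin])
  have hpart : ∀ i, ∃ x, ⟨i, x⟩ ∈ e := fun i => by
    obtain ⟨v, hv, rfl⟩ := mem_image.mp (hsurj ▸ mem_univ i)
    exact ⟨v.2, hv⟩
  choose g hg using hpart
  refine ⟨g, eq_of_subset_of_card_le ?_ (by rw [hcard, card_transversal])⟩
  rintro ⟨i, x⟩ hx
  exact mk_mem_transversal.mp hx ▸ hg i

lemma crossEdges_eq_map : crossEdges r r n = univ.map (transversalEmb n) := by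
  ext e
  constructor
  · intro he
    obtain ⟨g, rfl⟩ := exists_transversal_eq he
    exact mem_map_of_mem _ (mem_univ g)
  · intro he
    obtain ⟨g, -, rfl⟩ := mem_map.mp he
    exact transversal_mem_crossEdges g

lemma card_filter_apply_mem (i₀ : Fin r) (S₀ : Finset (Fin (n i₀))) :
    #{g : ∀ i, Fin (n i) | g i₀ ∈ S₀} = #S₀ * ∏ i ∈ univ.erase i₀, n i := by
  calc #{g : ∀ i, Fin (n i) | g i₀ ∈ S₀}
      = ∑ a ∈ S₀, #{g : ∀ i, Fin (n i) | g i₀ = a} := by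
        rw [card_eq_sum_card_fiberwise (f := fun g : ∀ i, Fin (n i) => g i₀) (t := S₀)
          fun g hg => by simpa using hg]
        refine sum_congr rfl fun a ha => congrArg card ?_
        ext g
        simp only [mem_filter, mem_univ, true_and, and_iff_right_iff_imp]
        exact fun h => h ▸ ha
    _ = ∑ _a ∈ S₀, ∏ i ∈ univ.erase i₀, n i := sum_congr rfl fun a _ => by
        simpa using Fintype.card_filter_piFinset_eq_of_mem
          (fun i => (univ : Finset (Fin (n i)))) i₀ (mem_univ a)
    _ = #S₀ * ∏ i ∈ univ.erase i₀, n i := by rw [sum_const, smul_eq_mul]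

lemma exists_not_hasMatching_card_eq (i₀ : Fin r) (S₀ : Finset (Fin (n i₀))) :
    ∃ H ⊆ crossEdges r r n,
      ¬ hasMatching H (#S₀ + 1) ∧ #H = #S₀ * ∏ i ∈ univ.erase i₀, n i := by
  refine ⟨(univ.filter fun g : ∀ i, Fin (n i) => g i₀ ∈ S₀).map (transversalEmb n),
    ?_, ?_, ?_⟩
  · rw [crossEdges_eq_map]
    exact map_subset_map.mpr (subset_univ _)
  · refine not_hasMatching_of_cover (S := S₀.map (.sigmaMk i₀)) (by simp) ?_
    intro e he
    obtain ⟨g, hg, rfl⟩ := mem_map.mp he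
    exact ⟨⟨i₀, g i₀⟩, mem_inter.mpr ⟨mk_mem_transversal.mpr rfl,
      mem_map_of_mem _ (mem_filter.mp hg).2⟩⟩
  · rw [card_map, card_filter_apply_mem]

/-- The transversals with a fixed value `c` of `shiftClass` form the cyclic diagonal
`g i = g i₀ + c i (mod n i)`, a matching. -/
def shiftClass {i₀ : Fin r} (hmin : ∀ i, n i₀ ≤ n i) (g : ∀ i, Fin (n i)) :
    ∀ i : {i // i ≠ i₀}, Fin (n i) :=
  fun i => g i - Fin.castLE (hmin i) (g i₀)

lemma ne_of_shiftClass_eq {i₀ : Fin r} {hmin : ∀ i, n i₀ ≤ n i} {g g' : ∀ i, Fin (n i)}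
    (h : shiftClass hmin g = shiftClass hmin g') (hne : g ≠ g') (i : Fin r) : g i ≠ g' i := by
  intro hi
  have h₀ : g i₀ = g' i₀ := by
    by_cases hii : i = i₀
    · exact hii ▸ hi
    · have hc := congrFun h ⟨i, hii⟩
      have : NeZero (n i) := NeZero.of_pos (g i).pos
      simp only [shiftClass, hi] at hc
      exact Fin.castLE_inj.mp (sub_right_injective hc)
  refine hne (funext fun j => ?_)
  by_cases hj : j = i₀
  · exact hj ▸ h₀
  · have hc := congrFun h ⟨j, hj⟩
    have : NeZero (n j) := NeZero.of_pos (g j).pos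
    simp only [shiftClass, h₀] at hc
    exact sub_left_injective hc

lemma card_le_of_not_hasMatching {k : ℕ} {i₀ : Fin r} (hmin : ∀ i, n i₀ ≤ n i)
    {H : Finset (Finset ((i : Fin r) × Fin (n i)))} (hH : H ⊆ crossEdges r r n)
    (hmatch : ¬ hasMatching H k) : #H ≤ (k - 1) * ∏ i ∈ univ.erase i₀, n i := by
  set G : Finset (∀ i, Fin (n i)) := {g | transversal n g ∈ H}
  have hHG : H = G.map (transversalEmb n) := by
    rw [← inter_eq_right.mpr hH, ← filter_mem_eq_inter, crossEdges_eq_map, filter_map]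
    rfl
  have hfiber : ∀ c ∈ univ, #{g ∈ G | shiftClass hmin g = c} ≤ k - 1 := by
    intro c _
    by_contra! hlt
    refine hmatch (hasMatching_of_le_card (F := {g ∈ G | shiftClass hmin g = c}.map
      (transversalEmb n)) ?_ ?_ (by rw [card_map]; omega))
    · rw [hHG]
      exact map_subset_map.mpr (filter_subset _ _)
    · intro e he e' he' hne
      obtain ⟨g, hg, rfl⟩ := mem_map.mp he
      obtain ⟨g', hg', rfl⟩ := mem_map.mp he'
      refine disjoint_transversal (ne_of_shiftClass_eq (hmin := hmin) ?_ fun h => hne (h ▸ rfl))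
      exact (mem_filter.mp hg).2.trans (mem_filter.mp hg').2.symm
  calc #H = #G := by rw [hHG, card_map]
    _ ≤ (k - 1) * #(univ : Finset (∀ i : {i // i ≠ i₀}, Fin (n i))) :=
      card_le_mul_card_image_of_maps_to (fun _ _ => mem_univ _) _ hfiber
    _ = (k - 1) * ∏ i ∈ univ.erase i₀, n i := by
      rw [card_univ, Fintype.card_pi]
      simp only [Fintype.card_fin]
      exact congrArg _ (prod_subtype (univ.erase i₀) (by simp) n).symm

end Transversal

theorem stmt2 (r k : ℕ) (hr : 0 < r) (n : Fin r → ℕ) (hmono : Monotone n)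
    (hk : 1 ≤ k) (hkn : k ≤ n ⟨0, hr⟩) :
    IsGreatest {m : ℕ | ∃ H ⊆ crossEdges r r n, ¬ hasMatching H k ∧ H.card = m}
      ((k - 1) * ∏ i ∈ Finset.univ.filter (fun i : Fin r => 0 < i.val), n i) := by
  have hmin : ∀ i, n ⟨0, hr⟩ ≤ n i := fun i => hmono (Nat.zero_le i.val)
  have hparts : univ.filter (fun i : Fin r => 0 < i.val) = univ.erase ⟨0, hr⟩ := by
    ext i
    simp [Fin.ext_iff, Nat.pos_iff_ne_zero]
  rw [hparts]
  obtain ⟨S₀, -, hS₀⟩ := exists_subset_card_eq (s := (univ : Finset (Fin (n ⟨0, hr⟩))))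
    (n := k - 1) (by rw [card_univ, Fintype.card_fin]; omega)
  obtain ⟨H, hH, hmatch, hcard⟩ := exists_not_hasMatching_card_eq ⟨0, hr⟩ S₀
  rw [hS₀, Nat.sub_add_cancel hk] at hmatch
  rw [hS₀] at hcard
  exact ⟨⟨H, hH, hmatch, hcard⟩, fun m ⟨H', hH', hmatch', hm⟩ =>
    hm ▸ card_le_of_not_hasMatching hmin hH' hmatch'⟩
end

section
/- Let 3 ≤ s ≤ r−1 and k ≥ 1, and suppose n ≥ s³k + sr when s ≤ r−2, and n ≥ s³k² + sr when s = r−1. Then the maximum number of edges in a subhypergraph of the complete r-partite s-uniform hypergraph with all r parts of size n containing no matching of size k equals (k−1) · C(r−1, s−1) · n^{s−1}. -/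
/-!
Fix one part and `k - 1` of its vertices: the edges through them form a family with no
`k`-matching (every edge contains one of these vertices, and disjoint edges contain different
ones), and the stars of vertices of one part are disjoint, each of size `D = C(r-1, s-1) n^(s-1)`.

Conversely, in the complete `r`-partite hypergraph every vertex has degree `D` and any two
vertices have codegree at most `C = C(r-2, s-2) n^(s-2)`, with `n C ≤ D`. By induction on `k`,
more than `k D` edges force a matching of size `k + 1` as soon as `s² (k+1) C ≤ D`. If some
vertex `v` has degree above `s (k+1) C`, deleting its star loses at most `D` edges, so there is a
`(k+1)`-matching avoiding `v`; its at most `s (k+1)` vertices lie in at most `s (k+1) C` edges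
through `v`, so some edge through `v` extends it. Otherwise all degrees are at most `s (k+1) C`;
a maximal matching has at most `k + 1` edges, and its vertices cover every edge, giving at most
`s² (k+1)² C ≤ (k+1) D` edges.
-/

open Finset

section Transversals

variable {ι β : Type*} [Fintype ι] [DecidableEq ι] [Fintype β] [DecidableEq β]

def sectionsOver (P : Finset ι) : Finset (Finset ((_ : ι) × β)) :=
  {S | S.image Sigma.fst = P ∧ Set.InjOn Sigma.fst (S : Set ((_ : ι) × β))}

omit [DecidableEq β] in
lemma mem_sectionsOver {P : Finset ι} {S : Finset ((_ : ι) × β)} :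
    S ∈ sectionsOver P ↔
      S.image Sigma.fst = P ∧ Set.InjOn Sigma.fst (S : Set ((_ : ι) × β)) := by
  simp [sectionsOver]

lemma card_sectionsOver (P : Finset ι) : #(sectionsOver (β := β) P) = Fintype.card β ^ #P := by
  rw [← Fintype.card_coe P, ← Fintype.card_fun, ← card_univ]
  symm
  refine card_bij (fun f _ => univ.image fun a : P => ⟨a.1, f a⟩) ?_ ?_ ?_
  · intro f _
    refine mem_sectionsOver.2 ⟨?_, ?_⟩
    · rw [image_image]
      exact (univ_eq_attach P ▸ attach_image_val : (univ : Finset P).image Subtype.val = P)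
    · rintro _ hu _ hw huw
      simp only [coe_image, coe_univ, Set.image_univ, Set.mem_range] at hu hw
      obtain ⟨a, rfl⟩ := hu
      obtain ⟨b, rfl⟩ := hw
      obtain rfl : a = b := Subtype.ext huw
      rfl
  · intro f _ g _ hfg
    funext a
    have : (⟨a.1, f a⟩ : (_ : ι) × β) ∈ univ.image fun a : P => ⟨a.1, g a⟩ := by
      rw [← hfg]; exact mem_image_of_mem _ (mem_univ a)
    obtain ⟨b, -, hb⟩ := mem_image.1 this
    obtain rfl : b = a := Subtype.ext (congrArg Sigma.fst hb)
    simpa using hb.symm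
  · intro S hS
    obtain ⟨hP, hinj⟩ := mem_sectionsOver.1 hS
    have hfiber : ∀ a : P, ∃ b : β, (⟨a.1, b⟩ : (_ : ι) × β) ∈ S := by
      rintro ⟨a, ha⟩
      obtain ⟨u, hu, rfl⟩ := mem_image.1 (hP ▸ ha)
      exact ⟨u.2, hu⟩
    choose f hf using hfiber
    refine ⟨f, mem_univ f, ?_⟩
    ext u
    simp only [mem_image, mem_univ, true_and]
    constructor
    · rintro ⟨a, rfl⟩
      exact hf a
    · intro hu
      have ha : u.1 ∈ P := hP ▸ mem_image_of_mem _ hu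
      exact ⟨⟨u.1, ha⟩, hinj (hf _) hu rfl⟩

def partialTransversals (A : Finset ι) (m : ℕ) : Finset (Finset ((_ : ι) × β)) :=
  {S | #S = m ∧ S.image Sigma.fst ⊆ A ∧ Set.InjOn Sigma.fst (S : Set ((_ : ι) × β))}

omit [DecidableEq β] in
lemma mem_partialTransversals {A : Finset ι} {m : ℕ} {S : Finset ((_ : ι) × β)} :
    S ∈ partialTransversals A m ↔
      #S = m ∧ S.image Sigma.fst ⊆ A ∧ Set.InjOn Sigma.fst (S : Set ((_ : ι) × β)) := by
  simp [partialTransversals]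

lemma card_partialTransversals (A : Finset ι) (m : ℕ) :
    #(partialTransversals (β := β) A m) = (#A).choose m * Fintype.card β ^ m := by
  have hmaps : Set.MapsTo (fun S : Finset ((_ : ι) × β) => S.image Sigma.fst)
      (partialTransversals (β := β) A m : Set (Finset ((_ : ι) × β))) (A.powersetCard m) := by
    intro S hS
    obtain ⟨hcard, hA, hinj⟩ := mem_partialTransversals.1 hS
    exact mem_powersetCard.2 ⟨hA, by rw [card_image_of_injOn hinj, hcard]⟩
  rw [card_eq_sum_card_fiberwise hmaps, ← card_powersetCard, ← smul_eq_mul, ← sum_const]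
  refine sum_congr rfl fun P hP => ?_
  obtain ⟨hPA, hPm⟩ := mem_powersetCard.1 hP
  rw [← hPm, ← card_sectionsOver]
  congr 1
  ext S
  simp only [mem_filter, mem_partialTransversals, mem_sectionsOver]
  constructor
  · rintro ⟨⟨-, -, hinj⟩, hS⟩
    exact ⟨hS, hinj⟩
  · rintro ⟨rfl, hinj⟩
    exact ⟨⟨(card_image_of_injOn hinj).symm, hPA, hinj⟩, rfl⟩

end Transversals

section Matching

variable {α : Type*} [DecidableEq α] {H : Finset (Finset α)}

lemma hasMatching_of_le {j k : ℕ} (hM : hasMatching H k) (hjk : j ≤ k) : hasMatching H j := by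
  obtain ⟨M, hMH, rfl, hdisj⟩ := hM
  obtain ⟨M', hM'M, rfl⟩ := exists_subset_card_eq hjk
  exact ⟨M', hM'M.trans hMH, rfl, hdisj.mono (coe_subset.2 hM'M)⟩

lemma not_hasMatching_of_cover_s8 {X : Finset α} {k : ℕ} (hX : ∀ e ∈ H, ∃ x ∈ X, x ∈ e)
    (hk : #X < k) : ¬ hasMatching H k := by
  rintro ⟨M, hMH, rfl, hdisj⟩
  refine (card_le_card_of_forall_subsingleton (fun e x => x ∈ e) (fun e he => hX e (hMH he))
    fun x _ e he e' he' => ?_).not_gt hk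
  by_contra hne
  exact disjoint_left.1 (hdisj he.1 he'.1 hne) he.2 he'.2

lemma card_le_card_mul_of_cover {X : Finset α} {B : ℕ} (hX : ∀ e ∈ H, ∃ x ∈ X, x ∈ e)
    (hB : ∀ x ∈ X, #{e ∈ H | x ∈ e} ≤ B) : #H ≤ #X * B := by
  calc #H ≤ #(X.biUnion fun x => {e ∈ H | x ∈ e}) := card_le_card fun e he => by
        obtain ⟨x, hx, hxe⟩ := hX e he
        exact mem_biUnion.2 ⟨x, hx, mem_filter.2 ⟨he, hxe⟩⟩
    _ ≤ #X * B := card_biUnion_le_card_mul _ _ _ hB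

lemma exists_cover_of_not_hasMatching {s m : ℕ} (hne : ∅ ∉ H) (hcard : ∀ e ∈ H, #e ≤ s)
    (hM : ¬ hasMatching H (m + 1)) :
    ∃ X : Finset α, #X ≤ s * m ∧ ∀ e ∈ H, ∃ x ∈ X, x ∈ e := by
  classical
  let matchings :=
    H.powerset.filter fun M : Finset (Finset α) => (M : Set (Finset α)).Pairwise Disjoint
  obtain ⟨M, hM', hmax⟩ :=
    exists_max_image matchings (fun M : Finset (Finset α) => #M) ⟨∅, by simp [matchings]⟩
  obtain ⟨hMH, hdisj⟩ : M ⊆ H ∧ (M : Set (Finset α)).Pairwise Disjoint := by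
    simpa [matchings] using hM'
  have hMm : #M ≤ m := by
    by_contra! hlt
    exact hM (hasMatching_of_le ⟨M, hMH, rfl, hdisj⟩ hlt)
  refine ⟨M.biUnion id, ?_, ?_⟩
  · calc #(M.biUnion id) ≤ #M * s := card_biUnion_le_card_mul _ _ _ fun e he => hcard e (hMH he)
      _ ≤ s * m := by rw [mul_comm]; exact Nat.mul_le_mul_left s hMm
  · by_contra! hmiss
    obtain ⟨e, he, hmiss⟩ := hmiss
    have hdisj_e : ∀ f ∈ M, Disjoint e f := fun f hf =>
      disjoint_left.2 fun x hxe hxf => hmiss x (mem_biUnion.2 ⟨f, hf, hxf⟩) hxe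
    have heM : e ∉ M := fun heM => by
      obtain ⟨x, hx⟩ := nonempty_iff_ne_empty.2 (ne_of_mem_of_not_mem he hne)
      exact hmiss x (mem_biUnion.2 ⟨e, heM, hx⟩) hx
    have hbigger : insert e M ∈ matchings := by
      simp only [matchings, mem_filter, mem_powerset, coe_insert]
      exact ⟨insert_subset he hMH, hdisj.insert_of_symm fun f hf _ => hdisj_e f hf⟩
    have := hmax _ hbigger
    rw [card_insert_of_notMem heM] at this
    omega

lemma hasMatching_succ_of_codegree_le {s C m : ℕ} {v : α} (hcard : ∀ e ∈ H, #e ≤ s)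
    (hcodeg : ∀ w, w ≠ v → #{e ∈ H | v ∈ e ∧ w ∈ e} ≤ C)
    (hv : s * m * C < #{e ∈ H | v ∈ e}) (hM : hasMatching {e ∈ H | v ∉ e} m) :
    hasMatching H (m + 1) := by
  obtain ⟨M, hMH, rfl, hdisj⟩ := hM
  have hvM : ∀ f ∈ M, v ∉ f := fun f hf => (mem_filter.1 (hMH hf)).2
  have hvX : v ∉ M.biUnion id := fun hv => by
    obtain ⟨f, hf, hvf⟩ := mem_biUnion.1 hv
    exact hvM f hf hvf
  obtain ⟨e, he, hve, heX⟩ : ∃ e ∈ H, v ∈ e ∧ ∀ x ∈ M.biUnion id, x ∉ e := by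
    by_contra! hmeet
    refine hv.not_ge ?_
    calc #{e ∈ H | v ∈ e}
        ≤ #(M.biUnion id) * C := card_le_card_mul_of_cover
          (fun e he => hmeet e (mem_filter.1 he).1 (mem_filter.1 he).2) fun x hx => by
            rw [filter_filter]; exact hcodeg x (ne_of_mem_of_not_mem hx hvX)
      _ ≤ #M * s * C := Nat.mul_le_mul_right _ <|
          card_biUnion_le_card_mul _ _ _ fun f hf => hcard f (filter_subset _ _ (hMH hf))
      _ = s * #M * C := by ring
  refine ⟨insert e M, insert_subset he (hMH.trans (filter_subset _ _)),
    card_insert_of_notMem fun heM => hvM e heM hve, ?_⟩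
  rw [coe_insert]
  exact hdisj.insert_of_symm fun f hf _ =>
    disjoint_left.2 fun x hxe hxf => heX x (mem_biUnion.2 ⟨f, hf, hxf⟩) hxe

theorem hasMatching_of_mul_lt_card {s D C : ℕ} (k : ℕ) (hne : ∅ ∉ H)
    (hcard : ∀ e ∈ H, #e ≤ s)
    (hdeg : ∀ v, #{e ∈ H | v ∈ e} ≤ D)
    (hcodeg : ∀ v w, w ≠ v → #{e ∈ H | v ∈ e ∧ w ∈ e} ≤ C)
    (hDC : s ^ 2 * (k + 1) * C ≤ D) (hH : k * D < #H) : hasMatching H (k + 1) := by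
  induction k generalizing H with
  | zero =>
    obtain ⟨e, he⟩ := card_pos.1 (by omega : 0 < #H)
    exact ⟨{e}, singleton_subset_iff.2 he, card_singleton e, by simp⟩
  | succ k ih =>
    by_cases hhigh : ∃ v, s * (k + 1) * C < #{e ∈ H | v ∈ e}
    · obtain ⟨v, hv⟩ := hhigh
      refine hasMatching_succ_of_codegree_le hcard (hcodeg v) hv (ih ?_ ?_ ?_ ?_ ?_ ?_)
      · exact fun h => hne (mem_filter.1 h).1
      · exact fun e he => hcard e (mem_filter.1 he).1
      · exact fun w => (card_le_card (filter_subset_filter _ (filter_subset _ _))).trans (hdeg w)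
      · exact fun u w hwu =>
          (card_le_card (filter_subset_filter _ (filter_subset _ _))).trans (hcodeg u w hwu)
      · exact le_trans (Nat.mul_le_mul_right _ (Nat.mul_le_mul_left _ (by omega))) hDC
      · have hsplit := card_filter_add_card_filter_not (s := H) (fun e => v ∈ e)
        have := hdeg v
        rw [add_mul, one_mul] at hH
        omega
    · push Not at hhigh
      by_contra hM
      obtain ⟨X, hX, hcover⟩ := exists_cover_of_not_hasMatching hne hcard hM
      refine hH.not_ge ?_
      calc #H ≤ #X * (s * (k + 1) * C) := card_le_card_mul_of_cover hcover fun x _ => hhigh x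
        _ ≤ s * (k + 1) * (s * (k + 1) * C) := Nat.mul_le_mul_right _ hX
        _ = (k + 1) * (s ^ 2 * (k + 1) * C) := by ring
        _ ≤ (k + 1) * D :=
          Nat.mul_le_mul_left _ (le_trans (Nat.mul_le_mul_right _ (Nat.mul_le_mul_left _
            (by omega))) hDC)

end Matching

lemma card_filter_fst_le_one_iff {ι : Type*} {κ : ι → Type*} [DecidableEq ι]
    {S : Finset ((i : ι) × κ i)} :
    (∀ i, #{v ∈ S | v.1 = i} ≤ 1) ↔ Set.InjOn Sigma.fst (S : Set ((i : ι) × κ i)) := by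
  refine ⟨fun h u hu w hw huw => ?_, fun h i => card_le_one.2 fun u hu w hw => ?_⟩
  · exact card_le_one.1 (h w.1) u (mem_filter.2 ⟨hu, huw⟩) w (mem_filter.2 ⟨hw, rfl⟩)
  · rw [mem_filter] at hu hw
    exact h hu.1 hw.1 (hu.2.trans hw.2.symm)

lemma mem_crossEdges {r s : ℕ} {n : Fin r → ℕ} {e : Finset ((i : Fin r) × Fin (n i))} :
    e ∈ crossEdges r s n ↔
      #e = s ∧ Set.InjOn Sigma.fst (e : Set ((i : Fin r) × Fin (n i))) := by
  simp [crossEdges, card_filter_fst_le_one_iff]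

section CrossEdges

variable {r s N : ℕ}

lemma card_filter_superset_crossEdges {T : Finset ((_ : Fin r) × Fin N)}
    (hT : Set.InjOn Sigma.fst (T : Set ((_ : Fin r) × Fin N))) (hTs : #T ≤ s) :
    #{e ∈ crossEdges r s (fun _ => N) | T ⊆ e} = (r - #T).choose (s - #T) * N ^ (s - #T) := by
  have hcount := card_partialTransversals (β := Fin N) (T.image Sigma.fst)ᶜ (s - #T)
  rw [card_compl, card_image_of_injOn hT, Fintype.card_fin, Fintype.card_fin] at hcount
  rw [← hcount]
  refine card_nbij' (· \ T) (· ∪ T) ?_ ?_ ?_ ?_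
  · intro e he
    obtain ⟨he, hTe⟩ := mem_filter.1 he
    obtain ⟨hcard, hinj⟩ := mem_crossEdges.1 he
    refine mem_partialTransversals.2 ⟨?_, ?_, hinj.mono sdiff_subset⟩
    · rw [card_sdiff_of_subset hTe, hcard]
    · intro i hi
      obtain ⟨u, hu, rfl⟩ := mem_image.1 hi
      rw [mem_sdiff] at hu
      rw [mem_compl, mem_image]
      rintro ⟨t, ht, htu⟩
      exact hu.2 (hinj (hTe ht) hu.1 htu ▸ ht)
  · intro S hS
    obtain ⟨hcard, hST, hinj⟩ := mem_partialTransversals.1 hS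
    have hparts : ∀ u ∈ S, ∀ t ∈ T, u.1 ≠ t.1 := fun u hu t ht h =>
      mem_compl.1 (hST (mem_image_of_mem _ hu)) (h ▸ mem_image_of_mem _ ht)
    have hdisj : Disjoint S T := disjoint_left.2 fun u hu hu' => hparts u hu u hu' rfl
    refine mem_filter.2 ⟨mem_crossEdges.2 ⟨?_, ?_⟩, subset_union_right⟩
    · rw [card_union_of_disjoint hdisj, hcard]
      omega
    · rw [coe_union, Set.injOn_union (disjoint_coe.2 hdisj)]
      exact ⟨hinj, hT, hparts⟩
  · intro e he
    exact sdiff_union_of_subset (mem_filter.1 he).2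
  · intro S hS
    obtain ⟨-, hST, -⟩ := mem_partialTransversals.1 hS
    refine union_sdiff_cancel_right (disjoint_left.2 fun u hu hu' => ?_)
    exact mem_compl.1 (hST (mem_image_of_mem _ hu)) (mem_image_of_mem _ hu')

lemma card_star_crossEdges (hs : 1 ≤ s) (v : (_ : Fin r) × Fin N) :
    #{e ∈ crossEdges r s (fun _ => N) | v ∈ e} = (r - 1).choose (s - 1) * N ^ (s - 1) := by
  simpa only [singleton_subset_iff, card_singleton] using
    card_filter_superset_crossEdges (T := {v}) (by simp) (by simpa using hs)

lemma card_codegree_crossEdges_le (hs : 2 ≤ s) {v w : (_ : Fin r) × Fin N} (hvw : w ≠ v) :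
    #{e ∈ crossEdges r s (fun _ => N) | v ∈ e ∧ w ∈ e}
      ≤ (r - 2).choose (s - 2) * N ^ (s - 2) := by
  by_cases hpart : v.1 = w.1
  · have hempty : {e ∈ crossEdges r s (fun _ => N) | v ∈ e ∧ w ∈ e} = ∅ :=
      filter_eq_empty_iff.2 fun e he hvw' =>
        hvw ((mem_crossEdges.1 he).2 hvw'.1 hvw'.2 hpart).symm
    simp [hempty]
  · have hT : Set.InjOn Sigma.fst (({v, w} : Finset _) : Set ((_ : Fin r) × Fin N)) := by
      rw [coe_pair, Set.injOn_pair]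
      exact fun h => absurd h hpart
    have := card_filter_superset_crossEdges (s := s) hT (by rw [card_pair hvw.symm]; exact hs)
    simpa only [insert_subset_iff, singleton_subset_iff, card_pair hvw.symm] using this.le

lemma mul_codegree_bound_le_degree_bound (hr : 2 ≤ r) (hs : 2 ≤ s) :
    N * ((r - 2).choose (s - 2) * N ^ (s - 2)) ≤ (r - 1).choose (s - 1) * N ^ (s - 1) := by
  obtain ⟨r, rfl⟩ := Nat.exists_eq_add_of_le hr
  obtain ⟨s, rfl⟩ := Nat.exists_eq_add_of_le hs
  simp only [Nat.add_sub_cancel_left, show 2 + r - 1 = r + 1 by omega,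
    show 2 + s - 1 = s + 1 by omega, Nat.choose_succ_succ', pow_succ]
  nlinarith [Nat.zero_le (r.choose (s + 1) * N ^ s * N)]

lemma card_le_of_not_hasMatching_crossEdges (hr : 2 ≤ r) (hs : 2 ≤ s) {k : ℕ}
    (hN : s ^ 2 * (k + 1) ≤ N) {H : Finset (Finset ((_ : Fin r) × Fin N))}
    (hH : H ⊆ crossEdges r s (fun _ => N)) (hM : ¬ hasMatching H (k + 1)) :
    #H ≤ k * ((r - 1).choose (s - 1) * N ^ (s - 1)) := by
  by_contra! hlt
  refine hM (hasMatching_of_mul_lt_card (s := s) (C := (r - 2).choose (s - 2) * N ^ (s - 2)) k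
    (fun h => ?_) (fun e he => ?_) (fun v => ?_) (fun v w hwv => ?_) ?_ hlt)
  · have := (mem_crossEdges.1 (hH h)).1
    rw [card_empty] at this
    omega
  · exact (mem_crossEdges.1 (hH he)).1.le
  · rw [← card_star_crossEdges (by omega)]
    exact card_le_card (filter_subset_filter _ hH)
  · exact (card_le_card (filter_subset_filter _ hH)).trans (card_codegree_crossEdges_le hs hwv)
  · exact (Nat.mul_le_mul_right _ hN).trans (mul_codegree_bound_le_degree_bound hr hs)

lemma exists_crossEdges_not_hasMatching (hr : 0 < r) (hs : 1 ≤ s) {m : ℕ} (hm : m ≤ N) :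
    ∃ H ⊆ crossEdges r s (fun _ => N), ¬ hasMatching H (m + 1) ∧
      #H = m * ((r - 1).choose (s - 1) * N ^ (s - 1)) := by
  obtain ⟨A, -, hA⟩ := exists_subset_card_eq (s := (univ : Finset (Fin N))) (by simpa using hm)
  let X := A.map (Function.Embedding.sigmaMk (β := fun _ : Fin r => Fin N) ⟨0, hr⟩)
  refine ⟨X.biUnion fun x => {e ∈ crossEdges r s (fun _ => N) | x ∈ e},
    biUnion_subset.2 fun _ _ => filter_subset _ _, not_hasMatching_of_cover_s8 (X := X) ?_ ?_, ?_⟩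
  · intro e he
    obtain ⟨x, hx, hxe⟩ := mem_biUnion.1 he
    exact ⟨x, hx, (mem_filter.1 hxe).2⟩
  · simp [X, hA]
  · rw [card_biUnion, sum_const_nat fun x _ => card_star_crossEdges hs x, card_map, hA]
    intro x hx y hy hxy
    refine disjoint_left.2 fun e hex hey => hxy ?_
    have hpart : x.1 = y.1 := by
      simp only [X, coe_map, Set.mem_image] at hx hy
      obtain ⟨a, -, rfl⟩ := hx
      obtain ⟨b, -, rfl⟩ := hy
      rfl
    exact (mem_crossEdges.1 (mem_filter.1 hex).1).2 (mem_filter.1 hex).2 (mem_filter.1 hey).2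
      hpart

end CrossEdges

theorem stmt8 (r s k N : ℕ) (hs : 3 ≤ s) (hsr : s ≤ r - 1) (hk : 1 ≤ k)
    (h1 : s ≤ r - 2 → s ^ 3 * k + s * r ≤ N)
    (h2 : s = r - 1 → s ^ 3 * k ^ 2 + s * r ≤ N) :
    IsGreatest {m : ℕ | ∃ H ⊆ crossEdges r s (fun _ => N), ¬ hasMatching H k ∧ H.card = m}
      ((k - 1) * Nat.choose (r - 1) (s - 1) * N ^ (s - 1)) := by
  have hN : s ^ 2 * k ≤ N := by
    have hsq : s ^ 2 * k ≤ s ^ 3 * k :=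
      Nat.mul_le_mul_right k (Nat.pow_le_pow_right (by omega) (by omega))
    rcases (by omega : s ≤ r - 2 ∨ s = r - 1) with h | h
    · exact hsq.trans ((Nat.le_add_right _ _).trans (h1 h))
    · exact hsq.trans <| (Nat.mul_le_mul_left _ (Nat.le_self_pow two_ne_zero k)).trans <|
        (Nat.le_add_right _ _).trans (h2 h)
  obtain ⟨k, rfl⟩ : ∃ j, k = j + 1 := ⟨k - 1, by omega⟩
  rw [Nat.add_sub_cancel, mul_assoc]
  refine ⟨exists_crossEdges_not_hasMatching (by omega) (by omega) ?_, ?_⟩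
  · exact (Nat.le_succ k).trans ((Nat.le_mul_of_pos_left _ (by positivity)).trans hN)
  · rintro _ ⟨H, hH, hM, rfl⟩
    exact card_le_of_not_hasMatching_crossEdges (by omega) (by omega) hN hH hM
end
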